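/- Let the training data satisfy ‖x_i‖₂ = 1 for i = 1,…,n, and let (a(t), B(t)) be a differentiable solution of the GD-conventional flow on [0, ∞) with a_j(0) = 0 for all j. Suppose there exist μ > 0 and M > 0 such that ĤR_n(a(t), B(t)) ≤ e^{−μt} ĤR_n(a(0), B(0)) and ‖b_j(t)‖₂ ≤ M for all t ≥ 0 and all j. Then for every j and every t ≥ 0, |a_j(t)| ≤ (2M/μ) √(ĤR_n(a(0), B(0))) and ‖ḃ_j(t)‖₂ ≤ (2M/μ) ĤR_n(a(0), B(0)) e^{−μt/2}; in particular the inner-layer velocities are of order 1/μ uniformly in time. -/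

import Mathlib

open MeasureTheory Real Finset
open scoped BigOperators ENNReal RealInnerProductSpace NNReal

noncomputable section

/-- ReLU activation. -/
def relu (t : ℝ) : ℝ := max t 0

/-- σ′(t) = 1_{t>0}. -/
def reluD (t : ℝ) : ℝ := if 0 < t then 1 else 0

/-- Gaussian measure on `EuclideanSpace ℝ (Fin d)` with i.i.d. `N(0, v)` coordinates. -/
def gaussianPi (d : ℕ) (v : ℝ≥0) : Measure (EuclideanSpace ℝ (Fin d)) :=
  Measure.map (MeasurableEquiv.toLp 2 (Fin d → ℝ))
    (Measure.pi fun _ : Fin d => ProbabilityTheory.gaussianReal 0 v)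

instance (d : ℕ) (v : ℝ≥0) : IsProbabilityMeasure (gaussianPi d v) :=
  Measure.isProbabilityMeasure_map (MeasurableEquiv.measurable _).aemeasurable

/-- The uniform probability distribution π₀ on the unit sphere `S^{d-1}`,
realized as the pushforward of the standard Gaussian under `x ↦ x / ‖x‖`. -/
def unifSphere (d : ℕ) : Measure (EuclideanSpace ℝ (Fin d)) :=
  Measure.map (fun x => ‖x‖⁻¹ • x) (gaussianPi d 1)

/-- Initialization measure for `B(0)`: rows i.i.d. `N(0, I_d / d)`. -/
def initMeasure (d m : ℕ) : Measure (Fin m → EuclideanSpace ℝ (Fin d)) :=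
  Measure.pi fun _ : Fin m => gaussianPi d (1 / d : ℝ≥0)

/-- Two-layer network under conventional scaling. -/
def fnet {d m : ℕ} (a : Fin m → ℝ) (B : Fin m → EuclideanSpace ℝ (Fin d))
    (x : EuclideanSpace ℝ (Fin d)) : ℝ :=
  ∑ j, a j * relu ⟪B j, x⟫

/-- Empirical risk. -/
def empRisk {d m n : ℕ} (X : Fin n → EuclideanSpace ℝ (Fin d)) (y : Fin n → ℝ)
    (a : Fin m → ℝ) (B : Fin m → EuclideanSpace ℝ (Fin d)) : ℝ :=
  (1 / n) * ∑ i, (fnet a B (X i) - y i) ^ 2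

/-- GD-conventional flow. -/
def IsGDFlow {d m n : ℕ} (X : Fin n → EuclideanSpace ℝ (Fin d)) (y : Fin n → ℝ)
    (a : ℝ → Fin m → ℝ) (B : ℝ → Fin m → EuclideanSpace ℝ (Fin d)) : Prop :=
  ∀ t : ℝ, ∀ j : Fin m,
    HasDerivAt (fun s => a s j)
      (-(1 / n : ℝ) * ∑ i, (fnet (a t) (B t) (X i) - y i) * relu ⟪B t j, X i⟫) t ∧
    HasDerivAt (fun s => B s j)
      ((-(1 / n : ℝ)) • ∑ i, ((fnet (a t) (B t) (X i) - y i) * a t j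
          * reluD ⟪B t j, X i⟫) • X i) t

/-- The Gram matrix K. -/
def gramMatrix {d n : ℕ} (X : Fin n → EuclideanSpace ℝ (Fin d)) :
    Matrix (Fin n) (Fin n) ℝ :=
  Matrix.of fun i j => (1 / n : ℝ) *
    ∫ b, relu ⟪X i, b⟫ * relu ⟪X j, b⟫ ∂(unifSphere d)


/-- GD-conventional flow on `[0,∞)` (one-sided derivatives at the boundary). -/
def IsGDFlowOn {d m n : ℕ} (X : Fin n → EuclideanSpace ℝ (Fin d)) (y : Fin n → ℝ)
    (a : ℝ → Fin m → ℝ) (B : ℝ → Fin m → EuclideanSpace ℝ (Fin d)) : Prop :=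
  ∀ t ∈ Set.Ici (0 : ℝ), ∀ j : Fin m,
    HasDerivWithinAt (fun s => a s j)
      (-(1 / n : ℝ) * ∑ i, (fnet (a t) (B t) (X i) - y i) * relu ⟪B t j, X i⟫)
      (Set.Ici 0) t ∧
    HasDerivWithinAt (fun s => B s j)
      ((-(1 / n : ℝ)) • ∑ i, ((fnet (a t) (B t) (X i) - y i) * a t j
          * reluD ⟪B t j, X i⟫) • X i) (Set.Ici 0) t

/-! Along the flow, both velocities are controlled by the mean absolute residual, which by
Cauchy–Schwarz is at most `√R̂(t) ≤ √R̂(0) e^{-μt/2}`. Since `|σ(bᵀx)| ≤ ‖b‖ ≤ M`, the speed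
of `a_j` is at most `M √R̂(0) e^{-μt/2}`, whose integral over `[0, ∞)` is `(2M/μ) √R̂(0)`; as
`a_j(0) = 0` this bounds `|a_j(t)|`. Since `|σ′| ≤ 1`, the speed of `b_j` is at most `|a_j(t)|`
times the mean absolute residual, which gives the second bound. -/

open Set

lemma mean_abs_le_sqrt_mean_sq {ι : Type*} [Fintype ι] (r : ι → ℝ) :
    (1 / Fintype.card ι : ℝ) * ∑ i, |r i| ≤
      Real.sqrt ((1 / Fintype.card ι : ℝ) * ∑ i, r i ^ 2) := by
  apply Real.le_sqrt_of_sq_le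
  simpa [div_eq_inv_mul, sq_abs] using
    sum_div_card_sq_le_sum_sq_div_card (s := univ) (f := fun i => |r i|)

/-- Comparison with `C ∫₀^∞ e^{-ks} ds = C / k`. -/
theorem norm_sub_le_of_norm_deriv_right_le_exp {E : Type*} [NormedAddCommGroup E]
    [NormedSpace ℝ E] {f f' : ℝ → E} {C k t : ℝ} (hk : 0 < k)
    (hf : ∀ s ∈ Ici (0 : ℝ), HasDerivWithinAt f (f' s) (Ici 0) s)
    (bound : ∀ s ∈ Ici (0 : ℝ), ‖f' s‖ ≤ C * Real.exp (-(k * s))) (ht : 0 ≤ t) :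
    ‖f t - f 0‖ ≤ C / k := by
  have hC : 0 ≤ C := by simpa using (norm_nonneg _).trans (bound 0 (mem_Ici.2 le_rfl))
  set G : ℝ → ℝ := fun s => C / k * (1 - Real.exp (-(k * s)))
  have hG : ∀ s, HasDerivAt G (C * Real.exp (-(k * s))) s := fun s => by
    have hlin : HasDerivAt (fun s => -(k * s)) (-k) s := by
      simpa using ((hasDerivAt_id s).const_mul k).fun_neg
    exact ((hlin.exp.const_sub 1).const_mul (C / k)).congr_deriv (by field_simp)
  have hfG : ‖f t - f 0‖ ≤ G t := by
    refine image_norm_le_of_norm_deriv_right_le_deriv_boundary (f := fun s => f s - f 0)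
      (fun s hs => ((hf s hs.1).continuousWithinAt.sub continuousWithinAt_const).mono
        Icc_subset_Ici_self)
      (fun s hs => ((hf s hs.1).sub_const (f 0)).mono (Ici_subset_Ici.mpr hs.1))
      (by simp [G]) hG (fun s hs => bound s hs.1) (right_mem_Icc.mpr ht)
  calc ‖f t - f 0‖ ≤ G t := hfG
    _ ≤ C / k := mul_le_of_le_one_right (by positivity)
        (sub_le_self _ (Real.exp_nonneg _))

lemma empRisk_nonneg {d m n : ℕ} (X : Fin n → EuclideanSpace ℝ (Fin d)) (y : Fin n → ℝ)
    (a : Fin m → ℝ) (B : Fin m → EuclideanSpace ℝ (Fin d)) : 0 ≤ empRisk X y a B := by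
  unfold empRisk; positivity

lemma mean_abs_residual_le_sqrt_empRisk {d m n : ℕ} (X : Fin n → EuclideanSpace ℝ (Fin d))
    (y : Fin n → ℝ) (a : Fin m → ℝ) (B : Fin m → EuclideanSpace ℝ (Fin d)) :
    (1 / n : ℝ) * ∑ i, |fnet a B (X i) - y i| ≤ Real.sqrt (empRisk X y a B) := by
  unfold empRisk
  simpa only [Fintype.card_fin] using mean_abs_le_sqrt_mean_sq fun i => fnet a B (X i) - y i

lemma mean_abs_residual_le_of_empRisk_le {d m n : ℕ} {X : Fin n → EuclideanSpace ℝ (Fin d)}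
    {y : Fin n → ℝ} {a : Fin m → ℝ} {B : Fin m → EuclideanSpace ℝ (Fin d)} {R c : ℝ}
    (h : empRisk X y a B ≤ Real.exp (-c) * R) :
    (1 / n : ℝ) * ∑ i, |fnet a B (X i) - y i| ≤ Real.sqrt R * Real.exp (-(c / 2)) := by
  calc (1 / n : ℝ) * ∑ i, |fnet a B (X i) - y i| ≤ Real.sqrt (empRisk X y a B) :=
        mean_abs_residual_le_sqrt_empRisk X y a B
    _ ≤ Real.sqrt (Real.exp (-c) * R) := Real.sqrt_le_sqrt h
    _ = Real.sqrt R * Real.exp (-(c / 2)) := by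
        rw [Real.sqrt_mul (Real.exp_nonneg _), ← Real.exp_half, neg_div, mul_comm]

section Velocities

variable {E : Type*} [NormedAddCommGroup E] [InnerProductSpace ℝ E]

lemma relu_nonneg (s : ℝ) : 0 ≤ relu s := le_max_right _ _

lemma relu_inner_le_norm {b x : E} (hx : ‖x‖ ≤ 1) : relu ⟪b, x⟫ ≤ ‖b‖ :=
  max_le ((real_inner_le_norm b x).trans (mul_le_of_le_one_right (norm_nonneg b) hx))
    (norm_nonneg b)

lemma abs_reluD_le_one (s : ℝ) : |reluD s| ≤ 1 := by
  unfold reluD; split_ifs <;> simp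

lemma abs_outer_velocity_le {n : ℕ} {X : Fin n → E} (hX : ∀ i, ‖X i‖ ≤ 1) (r : Fin n → ℝ)
    (b : E) :
    |-(1 / n : ℝ) * ∑ i, r i * relu ⟪b, X i⟫| ≤ ‖b‖ * ((1 / n : ℝ) * ∑ i, |r i|) := by
  have hterm : ∀ i, |r i * relu ⟪b, X i⟫| ≤ ‖b‖ * |r i| := fun i => by
    rw [abs_mul, abs_of_nonneg (relu_nonneg _), mul_comm]
    exact mul_le_mul_of_nonneg_right (relu_inner_le_norm (hX i)) (abs_nonneg _)
  calc |-(1 / n : ℝ) * ∑ i, r i * relu ⟪b, X i⟫|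
        = (1 / n : ℝ) * |∑ i, r i * relu ⟪b, X i⟫| := by
          rw [abs_mul, abs_neg, abs_of_nonneg (by positivity)]
    _ ≤ (1 / n : ℝ) * ∑ i, ‖b‖ * |r i| := by
          gcongr
          exact (abs_sum_le_sum_abs _ _).trans (sum_le_sum fun i _ => hterm i)
    _ = ‖b‖ * ((1 / n : ℝ) * ∑ i, |r i|) := by rw [← mul_sum]; ring

lemma norm_inner_velocity_le {n : ℕ} {X : Fin n → E} (hX : ∀ i, ‖X i‖ ≤ 1) (r : Fin n → ℝ)
    (b : E) (α : ℝ) :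
    ‖(-(1 / n : ℝ)) • ∑ i, (r i * α * reluD ⟪b, X i⟫) • X i‖ ≤
      |α| * ((1 / n : ℝ) * ∑ i, |r i|) := by
  have hterm : ∀ i, ‖(r i * α * reluD ⟪b, X i⟫) • X i‖ ≤ |α| * |r i| := fun i => by
    rw [norm_smul, Real.norm_eq_abs, abs_mul, abs_mul, mul_comm |r i|]
    calc |α| * |r i| * |reluD ⟪b, X i⟫| * ‖X i‖ ≤ |α| * |r i| * 1 * 1 := by
          gcongr
          exacts [abs_reluD_le_one _, hX i]
      _ = |α| * |r i| := by ring
  calc ‖(-(1 / n : ℝ)) • ∑ i, (r i * α * reluD ⟪b, X i⟫) • X i‖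
        = (1 / n : ℝ) * ‖∑ i, (r i * α * reluD ⟪b, X i⟫) • X i‖ := by
          rw [norm_smul, Real.norm_eq_abs, abs_neg, abs_of_nonneg (by positivity)]
    _ ≤ (1 / n : ℝ) * ∑ i, |α| * |r i| := by
          gcongr
          exact (norm_sum_le _ _).trans (sum_le_sum fun i _ => hterm i)
    _ = |α| * ((1 / n : ℝ) * ∑ i, |r i|) := by rw [← mul_sum]; ring

end Velocities

theorem quenched_dynamics_bounds_general (d m n : ℕ)
    (X : Fin n → EuclideanSpace ℝ (Fin d)) (y : Fin n → ℝ)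
    (hX : ∀ i, ‖X i‖ = 1)
    (a : ℝ → Fin m → ℝ) (B : ℝ → Fin m → EuclideanSpace ℝ (Fin d))
    (hflow : IsGDFlowOn X y a B) (ha0 : a 0 = 0)
    (μ M : ℝ) (hμ : 0 < μ)
    (hdecay : ∀ t, 0 ≤ t →
      empRisk X y (a t) (B t) ≤
        Real.exp (-(μ * t)) * empRisk X y (a 0) (B 0))
    (hbdd : ∀ t, 0 ≤ t → ∀ j : Fin m, ‖B t j‖ ≤ M)
    (j : Fin m) (t : ℝ) (ht : 0 ≤ t) :
    |a t j| ≤ (2 * M / μ) * Real.sqrt (empRisk X y (a 0) (B 0)) ∧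
      ∀ v : EuclideanSpace ℝ (Fin d),
        HasDerivWithinAt (fun s => B s j) v (Set.Ici 0) t →
          ‖v‖ ≤ (2 * M / μ) * empRisk X y (a 0) (B 0) *
            Real.exp (-(μ * t / 2)) := by
  set R0 := empRisk X y (a 0) (B 0)
  have hres : ∀ s, 0 ≤ s → (1 / n : ℝ) * ∑ i, |fnet (a s) (B s) (X i) - y i| ≤
      Real.sqrt R0 * Real.exp (-(μ * s / 2)) :=
    fun s hs => mean_abs_residual_le_of_empRisk_le (hdecay s hs)
  have hX_le : ∀ i, ‖X i‖ ≤ 1 := fun i => (hX i).le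
  have haj : |a t j| ≤ (2 * M / μ) * Real.sqrt R0 := by
    have hspeed : ∀ s ∈ Ici (0 : ℝ),
        ‖-(1 / n : ℝ) * ∑ i, (fnet (a s) (B s) (X i) - y i) * relu ⟪B s j, X i⟫‖ ≤
          M * Real.sqrt R0 * Real.exp (-(μ / 2 * s)) := fun s hs => by
      rw [Real.norm_eq_abs, div_mul_eq_mul_div, mul_assoc]
      calc _ ≤ ‖B s j‖ * ((1 / n : ℝ) * ∑ i, |fnet (a s) (B s) (X i) - y i|) :=
            abs_outer_velocity_le hX_le _ _
        _ ≤ M * (Real.sqrt R0 * Real.exp (-(μ * s / 2))) :=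
            mul_le_mul (hbdd s hs j) (hres s hs) (by positivity)
              ((norm_nonneg _).trans (hbdd s hs j))
    have := norm_sub_le_of_norm_deriv_right_le_exp (half_pos hμ) (fun s hs => (hflow s hs j).1)
      hspeed ht
    rw [ha0, Pi.zero_apply, sub_zero, Real.norm_eq_abs] at this
    exact this.trans_eq (by field_simp)
  refine ⟨haj, fun v hv => ?_⟩
  rw [(uniqueDiffOn_Ici 0 t ht).eq_deriv _ hv (hflow t ht j).2]
  calc _ ≤ |a t j| * ((1 / n : ℝ) * ∑ i, |fnet (a t) (B t) (X i) - y i|) :=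
        norm_inner_velocity_le hX_le _ _ _
    _ ≤ (2 * M / μ) * Real.sqrt R0 * (Real.sqrt R0 * Real.exp (-(μ * t / 2))) :=
        mul_le_mul haj (hres t ht) (by positivity) ((abs_nonneg _).trans haj)
    _ = (2 * M / μ) * R0 * Real.exp (-(μ * t / 2)) := by
        linear_combination (2 * M / μ * Real.exp (-(μ * t / 2))) *
          Real.mul_self_sqrt (empRisk_nonneg X y (a 0) (B 0))

/-- under exponential decay of the empirical risk and bounded inner
layer, starting from `a(0) = 0`, the outer coefficients stay `O(M/μ)` and the
inner-layer velocities are `O(M/μ) e^{-μt/2}`, uniformly in time. -/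
theorem quenched_dynamics_bounds (d m n : ℕ)
    (X : Fin n → EuclideanSpace ℝ (Fin d)) (y : Fin n → ℝ)
    (hX : ∀ i, ‖X i‖ = 1)
    (a : ℝ → Fin m → ℝ) (B : ℝ → Fin m → EuclideanSpace ℝ (Fin d))
    (hflow : IsGDFlowOn X y a B) (ha0 : a 0 = 0)
    (μ M : ℝ) (hμ : 0 < μ) (hM : 0 < M)
    (hdecay : ∀ t, 0 ≤ t →
      empRisk X y (a t) (B t) ≤
        Real.exp (-(μ * t)) * empRisk X y (a 0) (B 0))
    (hbdd : ∀ t, 0 ≤ t → ∀ j : Fin m, ‖B t j‖ ≤ M)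
    (j : Fin m) (t : ℝ) (ht : 0 ≤ t) :
    |a t j| ≤ (2 * M / μ) * Real.sqrt (empRisk X y (a 0) (B 0)) ∧
      ∀ v : EuclideanSpace ℝ (Fin d),
        HasDerivWithinAt (fun s => B s j) v (Set.Ici 0) t →
          ‖v‖ ≤ (2 * M / μ) * empRisk X y (a 0) (B 0) *
            Real.exp (-(μ * t / 2)) :=
  quenched_dynamics_bounds_general d m n X y hX a B hflow ha0 μ M hμ hdecay hbdd j t ht
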